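/- Let N be a positive integer, let s be a positive integer, let f : ℝ → ℝ be a continuously differentiable function with f ≥ 0, let a₁ > 0 and a₂ be real constants, and set a(t) = a₁ + a₂ t. Let I be an open interval containing 0 on which a(t) > 0. Define ρ(t,x) = f((1/a(t)^s) · Σ_{i=1}^N x_i^s) / a(t)^N and u(t,x) = (a'(t)/a(t)) · x on I × ℝ^N. Then (ρ, u) is a solution of the pressureless Euler equations: for all t ∈ I and x ∈ ℝ^N, both ∂ρ/∂t + Σ_{i=1}^N ∂(ρ u_i)/∂x_i = 0 and ρ(t,x) · (∂u/∂t (t,x) + (u(t,x)·∇)u(t,x)) = 0 hold. -/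

import Mathlib

/-!
The density is self-similar, `ρ(t, x) = a(t)^(-N) R(x / a(t))` with `R(y) = f(Σ yᵢ^s)`, and is
transported by the linear field `u = (a'/a) x`. Hence `∂ₜρ = -(a'/a) (N ρ + x · ∇ρ)`, which is
exactly minus `div (ρ u)`. For the momentum equation, `u = k(t) x` with `k = a₂ / a` solving the
Riccati equation `k' = -k²`, so `uₜ + (u · ∇) u = (k' + k²) x = 0`.
-/

open Finset Function

theorem natCast_mul_pow_sub_one_mul_self (n : ℕ) (z : ℝ) : n * z ^ (n - 1) * z = n * z ^ n := by
  rcases n with _ | n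
  · simp
  · rw [Nat.add_sub_cancel, pow_succ]
    ring

theorem HasDerivAt.one_div_pow {a : ℝ → ℝ} {a' t : ℝ} (ha : HasDerivAt a a' t) (ht : a t ≠ 0)
    (n : ℕ) : HasDerivAt (fun τ => 1 / a τ ^ n) (-(n * a' / a t) * (1 / a t ^ n)) t := by
  convert! (ha.fun_pow n).fun_inv (pow_ne_zero n ht) using 1
  · simp only [one_div]
  · field_simp
    linear_combination a' * natCast_mul_pow_sub_one_mul_self n (a t)

theorem HasDerivAt.const_div_riccati {a : ℝ → ℝ} {c t : ℝ} (ha : HasDerivAt a c t)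
    (ht : a t ≠ 0) : HasDerivAt (fun τ => c / a τ) (-(c / a t) ^ 2) t := by
  convert! (hasDerivAt_const t c).div ha ht using 1
  ring

theorem hasDerivAt_update_apply {ι : Type*} [DecidableEq ι] (x : ι → ℝ) (i j : ι) :
    HasDerivAt (fun y => update x i y j) (Pi.single (M := fun _ => ℝ) i 1 j) (x i) :=
  hasDerivAt_pi.mp (hasDerivAt_update x i (x i)) j

section
variable {ι : Type*} [Fintype ι] [DecidableEq ι]

theorem hasDerivAt_sum_pow_update (s : ℕ) (x : ι → ℝ) (i : ι) :
    HasDerivAt (fun y => ∑ j, update x i y j ^ s) (s * x i ^ (s - 1)) (x i) := by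
  convert! HasDerivAt.fun_sum fun j _ => (hasDerivAt_update_apply x i j).fun_pow s using 1
  simp [Pi.single_apply]

variable {f : ℝ → ℝ} {a : ℝ → ℝ} {a' t : ℝ}

theorem hasDerivAt_selfSimilar_density_time (hf : Differentiable ℝ f) (ha : HasDerivAt a a' t)
    (ht : a t ≠ 0) (s N : ℕ) (S : ℝ) :
    HasDerivAt (fun τ => f (1 / a τ ^ s * S) / a τ ^ N)
      (-(a' / a t / a t ^ N) * (s * deriv f (1 / a t ^ s * S) * (1 / a t ^ s * S)
        + N * f (1 / a t ^ s * S))) t := by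
  have h := ((hf _).hasDerivAt.comp t ((ha.one_div_pow ht s).mul_const S)).fun_mul
    (ha.one_div_pow ht N)
  simp only [comp_apply, mul_one_div] at h
  refine h.congr_deriv ?_
  ring

theorem hasDerivAt_selfSimilar_flux_space (hf : Differentiable ℝ f) (s : ℕ) (c A k : ℝ)
    (x : ι → ℝ) (i : ι) :
    HasDerivAt (fun y => f (c * ∑ j, update x i y j ^ s) / A * (k * update x i y i))
      (k / A * (s * deriv f (c * ∑ j, x j ^ s) * (c * x i ^ s) + f (c * ∑ j, x j ^ s))) (x i) := by
  have h := (((hf _).hasDerivAt.comp (x i)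
    ((hasDerivAt_sum_pow_update s x i).const_mul c)).div_const A).fun_mul
    ((hasDerivAt_update_apply x i i).const_mul k)
  simp only [comp_apply, update_eq_self, Pi.single_eq_same] at h
  refine h.congr_deriv ?_
  linear_combination (deriv f (c * ∑ j, x j ^ s) * c * k / A) *
    natCast_mul_pow_sub_one_mul_self s (x i)

theorem selfSimilar_continuity_eq_zero (hf : Differentiable ℝ f) (ha : HasDerivAt a a' t)
    (ht : a t ≠ 0) (s : ℕ) (x : ι → ℝ) :
    deriv (fun τ => f (1 / a τ ^ s * ∑ j, x j ^ s) / a τ ^ Fintype.card ι) t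
      + ∑ i, deriv (fun y => f (1 / a t ^ s * ∑ j, update x i y j ^ s) / a t ^ Fintype.card ι
          * (a' / a t * update x i y i)) (x i) = 0 := by
  rw [(hasDerivAt_selfSimilar_density_time hf ha ht s _ _).deriv,
    sum_congr rfl fun i _ => (hasDerivAt_selfSimilar_flux_space hf s (1 / a t ^ s)
      (a t ^ Fintype.card ι) (a' / a t) x i).deriv,
    ← mul_sum, sum_add_distrib, ← mul_sum, ← mul_sum, sum_const, card_univ, nsmul_eq_mul]
  ring

theorem linearVelocity_material_derivative_eq_zero {k : ℝ → ℝ} (hk : HasDerivAt k (-k t ^ 2) t)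
    (x : ι → ℝ) (i : ι) :
    deriv (fun τ => k τ * x i) t
      + ∑ j, k t * x j * deriv (fun y => k t * update x j y i) (x j) = 0 := by
  simp only [(hk.mul_const (x i)).deriv,
    fun j => ((hasDerivAt_update_apply x j i).const_mul (k t)).deriv,
    Pi.single_apply, mul_ite, mul_one, mul_zero, sum_ite_eq, mem_univ, if_true]
  ring

end

theorem pressureless_euler_exact_solution_general
    (N s : ℕ)
    (f : ℝ → ℝ) (hf : ContDiff ℝ 1 f)
    (a₁ a₂ : ℝ)
    (a : ℝ → ℝ) (ha : ∀ t, a t = a₁ + a₂ * t)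
    (I : Set ℝ)
    (ha_pos : ∀ t ∈ I, 0 < a t)
    (ρ : ℝ → (Fin N → ℝ) → ℝ) (u : ℝ → (Fin N → ℝ) → Fin N → ℝ)
    (hρ : ∀ t x, ρ t x = f ((1 / (a t) ^ s) * ∑ i, (x i) ^ s) / (a t) ^ N)
    (hu : ∀ t x i, u t x i = (deriv a t / a t) * x i) :
    ∀ t ∈ I, ∀ x : Fin N → ℝ,
      (deriv (fun τ => ρ τ x) t
        + ∑ i, deriv (fun y => ρ t (Function.update x i y)
            * u t (Function.update x i y) i) (x i) = 0)
      ∧ (∀ i : Fin N,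
          ρ t x * (deriv (fun τ => u τ x i) t
            + ∑ j, u t x j * deriv (fun y => u t (Function.update x j y) i) (x j)) = 0) := by
  have hda (τ : ℝ) : HasDerivAt a a₂ τ := by
    rw [show a = fun τ => a₁ + a₂ * τ from funext ha]
    simpa using ((hasDerivAt_id τ).const_mul a₂).const_add a₁
  obtain rfl : ρ = _ := funext fun t => funext (hρ t)
  obtain rfl : u = fun t x i => a₂ / a t * x i :=
    funext fun t => funext fun x => funext fun i => by rw [hu, (hda t).deriv]
  intro t ht x
  have hat : a t ≠ 0 := (ha_pos t ht).ne'
  refine ⟨?_, fun i => mul_eq_zero_of_right _ ?_⟩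
  · simpa only [Fintype.card_fin] using
      selfSimilar_continuity_eq_zero (hf.differentiable one_ne_zero) (hda t) hat s x
  · exact linearVelocity_material_derivative_eq_zero ((hda t).const_div_riccati hat) x i

/-- With `a(t) = a₁ + a₂ t`, the pair `ρ(t,x) = f((1/a(t)^s) Σ xᵢ^s)/a(t)^N`,
`u(t,x) = (a'(t)/a(t)) x` solves the pressureless Euler equations. -/
theorem pressureless_euler_exact_solution
    (N s : ℕ) (hN : 0 < N) (hs : 0 < s)
    (f : ℝ → ℝ) (hf : ContDiff ℝ 1 f) (hf_nonneg : ∀ y, 0 ≤ f y)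
    (a₁ a₂ : ℝ) (ha₁ : 0 < a₁)
    (a : ℝ → ℝ) (ha : ∀ t, a t = a₁ + a₂ * t)
    (t₁ t₂ : ℝ) (I : Set ℝ) (hI : I = Set.Ioo t₁ t₂) (h0I : (0 : ℝ) ∈ I)
    (ha_pos : ∀ t ∈ I, 0 < a t)
    (ρ : ℝ → (Fin N → ℝ) → ℝ) (u : ℝ → (Fin N → ℝ) → Fin N → ℝ)
    (hρ : ∀ t x, ρ t x = f ((1 / (a t) ^ s) * ∑ i, (x i) ^ s) / (a t) ^ N)
    (hu : ∀ t x i, u t x i = (deriv a t / a t) * x i) :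
    ∀ t ∈ I, ∀ x : Fin N → ℝ,
      (deriv (fun τ => ρ τ x) t
        + ∑ i, deriv (fun y => ρ t (Function.update x i y)
            * u t (Function.update x i y) i) (x i) = 0)
      ∧ (∀ i : Fin N,
          ρ t x * (deriv (fun τ => u τ x i) t
            + ∑ j, u t x j * deriv (fun y => u t (Function.update x j y) i) (x j)) = 0) :=
  pressureless_euler_exact_solution_general N s f hf a₁ a₂ a ha I ha_pos ρ u hρ hu
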